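/- arXiv:1705.07309 — 7 statements merged into one kernel-verified Lean document; each statement's English description precedes it below -/
import Mathlib

section
/- The following rule is admissible in the calculus ACT⁺: if A → C and C·A → C are both derivable in ACT⁺, then A⁺ → C is derivable in ACT⁺. -/
/-- Formulae: primitive types, product `mul`, left division `ldiv A B = A \ B`,
right division `rdiv B A = B / A`, additive disjunction `or`, and positive
iteration `plus A = A⁺`. -/
inductive Fm : Type where
  | pr : ℕ → Fm
  | mul : Fm → Fm → Fm
  | ldiv : Fm → Fm → Fm   -- `ldiv A B` is `A \ B`
  | rdiv : Fm → Fm → Fm   -- `rdiv B A` is `B / A`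
  | or : Fm → Fm → Fm
  | plus : Fm → Fm

/-- Derivability of arrows `A → B` in the calculus ACT⁺ (action logic with
positive iteration, Lambek's restriction built into the connectives). -/
inductive Act : Fm → Fm → Prop where
  | id (A : Fm) : Act A A
  | assoc_l (A B C : Fm) : Act (Fm.mul (Fm.mul A B) C) (Fm.mul A (Fm.mul B C))
  | assoc_r (A B C : Fm) : Act (Fm.mul A (Fm.mul B C)) (Fm.mul (Fm.mul A B) C)
  | plus_ax (A : Fm) : Act (Fm.or A (Fm.mul (Fm.plus A) (Fm.plus A))) (Fm.plus A)
  | res_rdiv_intro {A B C : Fm} : Act (Fm.mul A B) C → Act A (Fm.rdiv C B)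
  | res_rdiv_elim {A B C : Fm} : Act A (Fm.rdiv C B) → Act (Fm.mul A B) C
  | res_ldiv_intro {A B C : Fm} : Act (Fm.mul A B) C → Act B (Fm.ldiv A C)
  | res_ldiv_elim {A B C : Fm} : Act B (Fm.ldiv A C) → Act (Fm.mul A B) C
  | trans {A B C : Fm} : Act A B → Act B C → Act A C
  | or_r₁ {A B₁ B₂ : Fm} : Act A B₁ → Act A (Fm.or B₁ B₂)
  | or_r₂ {A B₁ B₂ : Fm} : Act A B₂ → Act A (Fm.or B₁ B₂)
  | or_l {A₁ A₂ B : Fm} : Act A₁ B → Act A₂ B → Act (Fm.or A₁ A₂) B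
  | plus_ind {A B : Fm} : Act (Fm.or A (Fm.mul B B)) B → Act (Fm.plus A) B

/-!
Residuation turns `C·A → C` into `A → C\C`, and `C\C` is closed under composition,
so iteration induction gives `A⁺ → C\C`. Unfolding `A⁺ → A ∨ A·A⁺` then reduces the
goal to `A → C` and `A·(C\C) → C·(C\C) → C`.
-/

namespace Act

lemma mul_mono {A B C D : Fm} (hAB : Act A B) (hCD : Act C D) :
    Act (Fm.mul A C) (Fm.mul B D) :=
  res_rdiv_elim <| hAB.trans <| res_rdiv_intro <| res_ldiv_elim <|
    hCD.trans <| res_ldiv_intro (id _)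

lemma or_mul {A B C D : Fm} (hA : Act (Fm.mul A C) D) (hB : Act (Fm.mul B C) D) :
    Act (Fm.mul (Fm.or A B) C) D :=
  res_rdiv_elim (or_l (res_rdiv_intro hA) (res_rdiv_intro hB))

lemma mul_ldiv (A B : Fm) : Act (Fm.mul A (Fm.ldiv A B)) B :=
  res_ldiv_elim (id _)

lemma ldiv_mul_ldiv (A B C : Fm) :
    Act (Fm.mul (Fm.ldiv A B) (Fm.ldiv B C)) (Fm.ldiv A C) :=
  res_ldiv_intro <| (assoc_r _ _ _).trans <|
    (mul_mono (mul_ldiv A B) (id _)).trans (mul_ldiv B C)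

lemma le_plus (A : Fm) : Act A (Fm.plus A) :=
  (or_r₁ (id A)).trans (plus_ax A)

lemma plus_mul_plus (A : Fm) : Act (Fm.mul (Fm.plus A) (Fm.plus A)) (Fm.plus A) :=
  (or_r₂ (id _)).trans (plus_ax A)

lemma mul_plus (A : Fm) : Act (Fm.mul A (Fm.plus A)) (Fm.plus A) :=
  (mul_mono (le_plus A) (id _)).trans (plus_mul_plus A)

lemma plus_unfold (A : Fm) : Act (Fm.plus A) (Fm.or A (Fm.mul A (Fm.plus A))) := by
  set E := Fm.or A (Fm.mul A (Fm.plus A))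
  have hE : Act E (Fm.plus A) := or_l (le_plus A) (mul_plus A)
  have hEA : Act (Fm.mul E (Fm.plus A)) (Fm.mul A (Fm.plus A)) :=
    or_mul (id _) <| (assoc_l _ _ _).trans (mul_mono (id A) (plus_mul_plus A))
  have hEE : Act (Fm.mul E E) E := or_r₂ <| (mul_mono (id E) hE).trans hEA
  exact plus_ind (or_l (or_r₁ (id A)) hEE)

lemma plus_le_ldiv_self {A C : Fm} (h : Act (Fm.mul C A) C) :
    Act (Fm.plus A) (Fm.ldiv C C) :=
  plus_ind (or_l (res_ldiv_intro h) (ldiv_mul_ldiv C C C))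

end Act

/-- The rule `from A → C and C·A → C infer A⁺ → C` is admissible in ACT⁺. -/
theorem short_rule_admissible {A C : Fm}
    (h₁ : Act A C) (h₂ : Act (Fm.mul C A) C) :
    Act (Fm.plus A) C :=
  (Act.plus_unfold A).trans <| Act.or_l h₁ <|
    (Act.mul_mono h₁ (Act.plus_le_ldiv_self h₂)).trans (Act.mul_ldiv C C)
end

section
/- For every k ≥ 1, the following rule is admissible in the calculus ACT⁺: if A → C, A² → C, …, Aᵏ → C, and Aᵏ·C → C are all derivable in ACT⁺ (where Aⁱ denotes the i-fold product A·A·…·A), then A⁺ → C is derivable in ACT⁺. -/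
/-- `apow A i` is the `(i+1)`-fold product `A·A·…·A` (associated to the left),
i.e. `apow A (i-1) = Aⁱ` for `i ≥ 1`. -/
def apow (A : Fm) : ℕ → Fm
  | 0 => A
  | n + 1 => Fm.mul (apow A n) A

/-!
Let `P = (Aᵏ)⁺` and `Q = A ∨ A² ∨ … ∨ Aᵏ`. Since `Aᵏ·C → C`, the induction rule gives
`P → C/C`, hence `P·C → C`, and so `B = Q ∨ P·Q → C`. It remains to show `A⁺ → B`, i.e. that `B`
is closed under products. This holds because `P·P → P`, because every `Aⁱ` commutes past `P`
(again by the induction rule, applied to `Aⁱ \ (P·Aⁱ)`), and because a product `Aⁱ·Aʲ` with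
`i, j ≤ k` either lies in `Q` or rewrites as `Aᵏ·A^(i+j-k) → P·Q`.
-/

local infixl:70 " ⬝ " => Fm.mul
local infix:50 " ⟹ " => Act

def Fm.bigOr (f : ℕ → Fm) : ℕ → Fm
  | 0 => f 0
  | n + 1 => Fm.or (Fm.bigOr f n) (f (n + 1))

namespace Act

instance : Trans Act Act Act := ⟨Act.trans⟩

theorem mul_right {X Y : Fm} (h : X ⟹ Y) (Z : Fm) : X ⬝ Z ⟹ Y ⬝ Z :=
  res_rdiv_elim (h.trans (res_rdiv_intro (id _)))

theorem mul_left {X Y : Fm} (Z : Fm) (h : X ⟹ Y) : Z ⬝ X ⟹ Z ⬝ Y :=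
  res_ldiv_elim (h.trans (res_ldiv_intro (id _)))

theorem or_mul_s13 {X Y Z W : Fm} (hX : X ⬝ Z ⟹ W) (hY : Y ⬝ Z ⟹ W) : Fm.or X Y ⬝ Z ⟹ W :=
  res_rdiv_elim (or_l (res_rdiv_intro hX) (res_rdiv_intro hY))

theorem mul_or {X Y Z W : Fm} (hX : Z ⬝ X ⟹ W) (hY : Z ⬝ Y ⟹ W) : Z ⬝ Fm.or X Y ⟹ W :=
  res_ldiv_elim (or_l (res_ldiv_intro hX) (res_ldiv_intro hY))

theorem le_plus_s13 (X : Fm) : X ⟹ Fm.plus X :=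
  (or_r₁ (id X)).trans (plus_ax X)

theorem plus_mul_plus_s13 (X : Fm) : Fm.plus X ⬝ Fm.plus X ⟹ Fm.plus X :=
  (or_r₂ (id _)).trans (plus_ax X)

theorem plus_mul_le {X C : Fm} (h : X ⬝ C ⟹ C) : Fm.plus X ⬝ C ⟹ C := by
  have hdiv : Fm.rdiv C C ⬝ Fm.rdiv C C ⬝ C ⟹ C :=
    calc Fm.rdiv C C ⬝ Fm.rdiv C C ⬝ C
        _ ⟹ Fm.rdiv C C ⬝ (Fm.rdiv C C ⬝ C) := assoc_l _ _ _
        _ ⟹ Fm.rdiv C C ⬝ C := mul_left _ (res_rdiv_elim (id _))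
        _ ⟹ C := res_rdiv_elim (id _)
  exact res_rdiv_elim (plus_ind (or_l (res_rdiv_intro h) (res_rdiv_intro hdiv)))

theorem mul_plus_comm {X Y : Fm} (h : Y ⬝ X ⟹ X ⬝ Y) : Y ⬝ Fm.plus X ⟹ Fm.plus X ⬝ Y := by
  set D := Fm.ldiv Y (Fm.plus X ⬝ Y)
  have hD : Y ⬝ D ⟹ Fm.plus X ⬝ Y := res_ldiv_elim (id _)
  have hXD : X ⟹ D := res_ldiv_intro (h.trans ((le_plus_s13 X).mul_right Y))
  have hDD : D ⬝ D ⟹ D := res_ldiv_intro <|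
    calc Y ⬝ (D ⬝ D)
        _ ⟹ Y ⬝ D ⬝ D := assoc_r _ _ _
        _ ⟹ Fm.plus X ⬝ Y ⬝ D := hD.mul_right D
        _ ⟹ Fm.plus X ⬝ (Y ⬝ D) := assoc_l _ _ _
        _ ⟹ Fm.plus X ⬝ (Fm.plus X ⬝ Y) := mul_left _ hD
        _ ⟹ Fm.plus X ⬝ Fm.plus X ⬝ Y := assoc_r _ _ _
        _ ⟹ Fm.plus X ⬝ Y := (plus_mul_plus_s13 X).mul_right Y
  exact (mul_left Y (plus_ind (or_l hXD hDD))).trans hD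

theorem or_mul_self_le {P Q : Fm} (hPP : P ⬝ P ⟹ P) (hQP : Q ⬝ P ⟹ P ⬝ Q)
    (hQQ : Q ⬝ Q ⟹ Fm.or Q (P ⬝ Q)) : Fm.or Q (P ⬝ Q) ⬝ Fm.or Q (P ⬝ Q) ⟹ Fm.or Q (P ⬝ Q) := by
  set B := Fm.or Q (P ⬝ Q)
  have hPQB : P ⬝ Q ⟹ B := or_r₂ (id _)
  have hPB : P ⬝ B ⟹ P ⬝ Q :=
    mul_or (id _) ((assoc_r _ _ _).trans (hPP.mul_right Q))
  have hQB : Q ⬝ B ⟹ B := mul_or hQQ <|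
    calc Q ⬝ (P ⬝ Q)
        _ ⟹ Q ⬝ P ⬝ Q := assoc_r _ _ _
        _ ⟹ P ⬝ Q ⬝ Q := hQP.mul_right Q
        _ ⟹ P ⬝ (Q ⬝ Q) := assoc_l _ _ _
        _ ⟹ P ⬝ B := mul_left P hQQ
        _ ⟹ B := hPB.trans hPQB
  exact or_mul_s13 hQB <|
    calc P ⬝ Q ⬝ B
        _ ⟹ P ⬝ (Q ⬝ B) := assoc_l _ _ _
        _ ⟹ P ⬝ B := mul_left P hQB
        _ ⟹ B := hPB.trans hPQB

theorem le_bigOr (f : ℕ → Fm) {i n : ℕ} (h : i ≤ n) : f i ⟹ Fm.bigOr f n := by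
  induction n with
  | zero => obtain rfl := Nat.le_zero.mp h; exact id _
  | succ n ih =>
    rcases Nat.of_le_succ h with hle | rfl
    · exact or_r₁ (ih hle)
    · exact or_r₂ (id _)

theorem bigOr_le {f : ℕ → Fm} {G : Fm} {n : ℕ} (h : ∀ i ≤ n, f i ⟹ G) : Fm.bigOr f n ⟹ G := by
  induction n with
  | zero => exact h 0 le_rfl
  | succ n ih => exact or_l (ih fun i hi => h i (Nat.le_succ_of_le hi)) (h (n + 1) le_rfl)

theorem bigOr_mul_le {f : ℕ → Fm} {Z W : Fm} {n : ℕ} (h : ∀ i ≤ n, f i ⬝ Z ⟹ W) :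
    Fm.bigOr f n ⬝ Z ⟹ W :=
  res_rdiv_elim (bigOr_le fun i hi => res_rdiv_intro (h i hi))

theorem mul_bigOr_le {f : ℕ → Fm} {Z W : Fm} {n : ℕ} (h : ∀ i ≤ n, Z ⬝ f i ⟹ W) :
    Z ⬝ Fm.bigOr f n ⟹ W :=
  res_ldiv_elim (bigOr_le fun i hi => res_ldiv_intro (h i hi))

end Act

open Act

section Powers

variable (A : Fm)

theorem apow_mul_apow_le (m n : ℕ) : apow A m ⬝ apow A n ⟹ apow A (m + n + 1) := by
  induction n with
  | zero => exact Act.id _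
  | succ n ih => exact (assoc_r _ _ _).trans (ih.mul_right A)

theorem apow_le_apow_mul_apow (m n : ℕ) : apow A (m + n + 1) ⟹ apow A m ⬝ apow A n := by
  induction n with
  | zero => exact Act.id _
  | succ n ih => exact (ih.mul_right A).trans (assoc_l _ _ _)

theorem apow_mul_apow_comm (m n : ℕ) : apow A m ⬝ apow A n ⟹ apow A n ⬝ apow A m := by
  have h := apow_le_apow_mul_apow A n m
  rw [show n + m + 1 = m + n + 1 by omega] at h
  exact (apow_mul_apow_le A m n).trans h

variable (n : ℕ)

theorem bigOr_apow_mul_plus_comm :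
    Fm.bigOr (apow A) n ⬝ Fm.plus (apow A n) ⟹ Fm.plus (apow A n) ⬝ Fm.bigOr (apow A) n :=
  mul_plus_comm <| bigOr_mul_le fun i hi =>
    (apow_mul_apow_comm A i n).trans (mul_left _ (le_bigOr _ hi))

theorem bigOr_apow_mul_self_le :
    Fm.bigOr (apow A) n ⬝ Fm.bigOr (apow A) n ⟹
      Fm.or (Fm.bigOr (apow A) n) (Fm.plus (apow A n) ⬝ Fm.bigOr (apow A) n) :=
  bigOr_mul_le fun i hi => mul_bigOr_le fun j hj => by
    refine (apow_mul_apow_le A i j).trans ?_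
    rcases le_or_gt (i + j + 1) n with hle | hgt
    · exact or_r₁ (le_bigOr _ hle)
    · obtain ⟨r, hr, hij⟩ : ∃ r ≤ n, i + j + 1 = n + r + 1 := ⟨i + j - n, by omega, by omega⟩
      rw [hij]
      exact (apow_le_apow_mul_apow A n r).trans <| or_r₂ <|
        ((le_plus_s13 _).mul_right _).trans (mul_left _ (le_bigOr _ hr))

theorem plus_le_of_apow_le {C : Fm} (hpow : ∀ m ≤ n, apow A m ⟹ C)
    (hmul : apow A n ⬝ C ⟹ C) : Fm.plus A ⟹ C := by
  have hclosed := or_mul_self_le (plus_mul_plus_s13 _) (bigOr_apow_mul_plus_comm A n)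
    (bigOr_apow_mul_self_le A n)
  have hA : A ⟹ Fm.bigOr (apow A) n := le_bigOr (apow A) (Nat.zero_le n)
  refine (plus_ind (or_l (or_r₁ hA) hclosed)).trans (or_l (bigOr_le hpow) ?_)
  exact (mul_left _ (bigOr_le hpow)).trans (plus_mul_le hmul)

end Powers

/-- For every `k ≥ 1`, the rule `from A → C, A² → C, …, Aᵏ → C and Aᵏ·C → C
infer A⁺ → C` is admissible in ACT⁺. -/
theorem long_rule_admissible {A C : Fm} {k : ℕ} (hk : 1 ≤ k)
    (h : ∀ i : ℕ, 1 ≤ i → i ≤ k → Act (apow A (i - 1)) C)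
    (h' : Act (Fm.mul (apow A (k - 1)) C) C) :
    Act (Fm.plus A) C := by
  obtain ⟨n, rfl⟩ : ∃ n, k = n + 1 := ⟨k - 1, by omega⟩
  exact plus_le_of_apow_le A n (fun m hm => h (m + 1) (by omega) (by omega)) h'
end

section
/- Every arrow derivable in ACT⁺ is derivable, as a sequent with a one-formula antecedent, in L⁺_ω(∨): if A → B is derivable in ACT⁺, then the sequent A → B is derivable in L⁺_ω(∨). -/
/-- Derivability in L⁺_ω(∨): the infinitary Lambek calculus with positive
iteration and additive disjunction.  `DerLwV P A` means the sequent `P → A`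
is derivable; `plus_l` is the ω-rule. -/
inductive DerLwV : List Fm → Fm → Prop where
  | ax (A : Fm) : DerLwV [A] A
  | ldiv_r {P : List Fm} {A B : Fm} (hne : P ≠ []) :
      DerLwV (A :: P) B → DerLwV P (Fm.ldiv A B)
  | ldiv_l {P Γ Δ : List Fm} {A B C : Fm} :
      DerLwV P A → DerLwV (Γ ++ B :: Δ) C →
      DerLwV (Γ ++ P ++ Fm.ldiv A B :: Δ) C
  | rdiv_r {P : List Fm} {A B : Fm} (hne : P ≠ []) :
      DerLwV (P ++ [A]) B → DerLwV P (Fm.rdiv B A)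
  | rdiv_l {P Γ Δ : List Fm} {A B C : Fm} :
      DerLwV P A → DerLwV (Γ ++ B :: Δ) C →
      DerLwV (Γ ++ Fm.rdiv B A :: (P ++ Δ)) C
  | mul_r {Γ Δ : List Fm} {A B : Fm} :
      DerLwV Γ A → DerLwV Δ B → DerLwV (Γ ++ Δ) (Fm.mul A B)
  | mul_l {Γ Δ : List Fm} {A B C : Fm} :
      DerLwV (Γ ++ A :: B :: Δ) C → DerLwV (Γ ++ Fm.mul A B :: Δ) C
  | or_r₁ {Γ : List Fm} {A₁ A₂ : Fm} :
      DerLwV Γ A₁ → DerLwV Γ (Fm.or A₁ A₂)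
  | or_r₂ {Γ : List Fm} {A₁ A₂ : Fm} :
      DerLwV Γ A₂ → DerLwV Γ (Fm.or A₁ A₂)
  | or_l {Γ Δ : List Fm} {A₁ A₂ C : Fm} :
      DerLwV (Γ ++ A₁ :: Δ) C → DerLwV (Γ ++ A₂ :: Δ) C →
      DerLwV (Γ ++ Fm.or A₁ A₂ :: Δ) C
  | plus_r {A : Fm} (Ps : List (List Fm)) (hne : Ps ≠ []) :
      (∀ P ∈ Ps, DerLwV P A) → DerLwV Ps.flatten (Fm.plus A)
  | plus_l {Γ Δ : List Fm} {A C : Fm} :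
      (∀ n : ℕ, 1 ≤ n → DerLwV (Γ ++ List.replicate n A ++ Δ) C) →
      DerLwV (Γ ++ Fm.plus A :: Δ) C

/-!
Okada's semantic cut elimination: the cut-free calculus is itself a model. A formula `A` is
interpreted as a set `⟦A⟧` of non-empty antecedents. Products, disjunctions and iterations are
interpreted through the closure `cl X`: the non-empty antecedents derivable in every context
`Γ, _, Δ → C` in which all members of `X` are derivable. Divisions are the residuals of
concatenation. Because all these sets avoid the empty sequence (Lambek's restriction), `X ⊆ cl X`;
`cl` is compatible with concatenation and residuals of closed sets are closed, so every ACT⁺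
arrow `A → B` gives `⟦A⟧ ⊆ ⟦B⟧`. With `⟦A⁺⟧ = cl (⟦A⟧ ⟦A⟧∗)`, the induction rule becomes the
Kleene-algebra law `b ≤ c → c a ≤ c → b a∗ ≤ c`. On the other hand, an induction on formulas
using only the cut-free rules shows `[A] ∈ ⟦A⟧` and that every `x ∈ ⟦A⟧` derives `A`. Hence
`[A] ∈ ⟦A⟧ ⊆ ⟦B⟧` derives `B`.
-/

open scoped Computability

theorem mul_kstar_mul_mul_kstar_le {α : Type*} [KleeneAlgebra α] (a : α) :
    a * a∗ * (a * a∗) ≤ a * a∗ :=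
  calc a * a∗ * (a * a∗) = a * (a∗ * (a * a∗)) := by rw [mul_assoc]
    _ ≤ a * (a∗ * a∗) := mul_le_mul_right (mul_le_mul_right mul_kstar_le_kstar _) _
    _ = a * a∗ := by rw [kstar_mul_kstar]

theorem Language.replicate_mem_mul_kstar {α : Type*} {l : Language α} {a : α} (ha : [a] ∈ l)
    {n : ℕ} (hn : 1 ≤ n) : List.replicate n a ∈ l * l∗ := by
  obtain ⟨m, rfl⟩ := Nat.exists_eq_add_of_le' hn
  rw [List.replicate_succ, ← List.flatten_replicate_singleton]
  exact append_mem_mul ha (join_mem_kstar fun y hy => List.eq_of_mem_replicate hy ▸ ha)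

theorem Language.nil_notMem_mul_of_left {α : Type*} {l m : Language α} (hl : [] ∉ l) :
    [] ∉ l * m := by
  rintro ⟨a, ha, b, -, hab⟩
  exact hl ((List.append_eq_nil_iff.mp hab).1 ▸ ha)

namespace LwV

structure Ctx where
  left : List Fm
  right : List Fm
  goal : Fm

namespace Ctx

def Derives (c : Ctx) (x : List Fm) : Prop :=
  DerLwV (c.left ++ x ++ c.right) c.goal

variable {c : Ctx} {A B : Fm}

theorem Derives.mul_l (h : c.Derives [A, B]) : c.Derives [A.mul B] := by
  simpa [Derives] using DerLwV.mul_l (Γ := c.left) (Δ := c.right) (by simpa [Derives] using h)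

theorem Derives.or_l (hA : c.Derives [A]) (hB : c.Derives [B]) : c.Derives [A.or B] := by
  simpa [Derives] using DerLwV.or_l (Γ := c.left) (Δ := c.right)
    (by simpa [Derives] using hA) (by simpa [Derives] using hB)

theorem Derives.plus_l (h : ∀ n, 1 ≤ n → c.Derives (List.replicate n A)) :
    c.Derives [A.plus] := by
  simpa [Derives] using DerLwV.plus_l (Γ := c.left) (Δ := c.right) h

theorem Derives.ldiv_l {a : List Fm} (ha : DerLwV a A) (h : c.Derives [B]) :
    c.Derives (a ++ [A.ldiv B]) := by
  simpa [Derives] using DerLwV.ldiv_l (Γ := c.left) (Δ := c.right) ha (by simpa [Derives] using h)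

theorem Derives.rdiv_l {a : List Fm} (ha : DerLwV a A) (h : c.Derives [B]) :
    c.Derives ([B.rdiv A] ++ a) := by
  simpa [Derives] using DerLwV.rdiv_l (Γ := c.left) (Δ := c.right) ha (by simpa [Derives] using h)

end Ctx

def cl (X : Language Fm) : Language Fm :=
  {x | x ≠ [] ∧ ∀ c : Ctx, (∀ y ∈ X, c.Derives y) → c.Derives x}

section Closure

variable {X Y Z : Language Fm}

theorem le_cl (hX : [] ∉ X) : X ≤ cl X :=
  fun x hx => ⟨ne_of_mem_of_not_mem hx hX, fun _ hc => hc x hx⟩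

theorem cl_mono (h : X ≤ Y) : cl X ≤ cl Y :=
  fun _ hx => ⟨hx.1, fun c hc => hx.2 c fun y hy => hc y (h hy)⟩

theorem cl_le_cl (h : X ≤ cl Y) : cl X ≤ cl Y :=
  fun _ hx => ⟨hx.1, fun c hc => hx.2 c fun _ hy => (h hy).2 c hc⟩

theorem cl_cl_le : cl (cl X) ≤ cl X :=
  cl_le_cl le_rfl

theorem cl_le_iff (hX : [] ∉ X) (hZ : cl Z ≤ Z) : cl X ≤ Z ↔ X ≤ Z :=
  ⟨fun h => (le_cl hX).trans h, fun h => (cl_mono h).trans hZ⟩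

theorem cl_mul_le : cl X * Y ≤ cl (X * Y) := by
  rintro _ ⟨a, ha, b, hb, rfl⟩
  refine ⟨List.append_ne_nil_of_left_ne_nil ha.1 b, fun c hc => ?_⟩
  have := ha.2 ⟨c.left, b ++ c.right, c.goal⟩ fun x hx => by
    simpa [Ctx.Derives] using hc _ (Language.append_mem_mul hx hb)
  simpa [Ctx.Derives] using this

theorem mul_cl_le : X * cl Y ≤ cl (X * Y) := by
  rintro _ ⟨a, ha, b, hb, rfl⟩
  refine ⟨List.append_ne_nil_of_right_ne_nil a hb.1, fun c hc => ?_⟩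
  have := hb.2 ⟨c.left ++ a, c.right, c.goal⟩ fun y hy => by
    simpa [Ctx.Derives] using hc _ (Language.append_mem_mul ha hy)
  simpa [Ctx.Derives] using this

theorem cl_mul_cl_le : cl X * cl Y ≤ cl (X * Y) :=
  cl_mul_le.trans ((cl_mono mul_cl_le).trans cl_cl_le)

theorem cl_cl_mul_mul_le (hY : [] ∉ Y) : cl (cl (X * Y) * Z) ≤ cl (X * cl (Y * Z)) :=
  cl_le_cl <| calc
    cl (X * Y) * Z ≤ cl (X * Y * Z) := cl_mul_le
    _ = cl (X * (Y * Z)) := by rw [mul_assoc]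
    _ ≤ cl (X * cl (Y * Z)) :=
      cl_mono (mul_le_mul_right (le_cl (Language.nil_notMem_mul_of_left hY)) X)

theorem cl_mul_cl_mul_le (hX : [] ∉ X) : cl (X * cl (Y * Z)) ≤ cl (cl (X * Y) * Z) :=
  cl_le_cl <| calc
    X * cl (Y * Z) ≤ cl (X * (Y * Z)) := mul_cl_le
    _ = cl (X * Y * Z) := by rw [mul_assoc]
    _ ≤ cl (cl (X * Y) * Z) :=
      cl_mono (mul_le_mul_left (le_cl (Language.nil_notMem_mul_of_left hX)) Z)

theorem cl_add_cl_mul_le (hX : [] ∉ X) :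
    cl (X + cl (cl (X * X∗) * cl (X * X∗))) ≤ cl (X * X∗) := by
  refine cl_le_cl (add_le_iff.mpr ⟨?_, cl_le_cl ?_⟩)
  · calc X = X * 1 := (mul_one X).symm
      _ ≤ X * X∗ := mul_le_mul_right one_le_kstar X
      _ ≤ cl (X * X∗) := le_cl (Language.nil_notMem_mul_of_left hX)
  · exact cl_mul_cl_le.trans (cl_mono (mul_kstar_mul_mul_kstar_le X))

end Closure

def ldiv (X Y : Language Fm) : Language Fm :=
  {x | x ≠ [] ∧ ∀ a ∈ X, a ++ x ∈ Y}

def rdiv (Y X : Language Fm) : Language Fm :=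
  {x | x ≠ [] ∧ ∀ a ∈ X, x ++ a ∈ Y}

section Residuals

variable {X Y Z : Language Fm}

theorem mul_le_iff_le_ldiv (hY : [] ∉ Y) : X * Y ≤ Z ↔ Y ≤ ldiv X Z :=
  ⟨fun h y hy => ⟨ne_of_mem_of_not_mem hy hY, fun _ ha => h (Language.append_mem_mul ha hy)⟩,
    by rintro h _ ⟨a, ha, y, hy, rfl⟩; exact (h hy).2 a ha⟩

theorem mul_le_iff_le_rdiv (hX : [] ∉ X) : X * Y ≤ Z ↔ X ≤ rdiv Z Y :=
  ⟨fun h x hx => ⟨ne_of_mem_of_not_mem hx hX, fun _ ha => h (Language.append_mem_mul hx ha)⟩,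
    by rintro h _ ⟨x, hx, a, ha, rfl⟩; exact (h hx).2 a ha⟩

theorem cl_ldiv_le (hY : cl Y ≤ Y) : cl (ldiv X Y) ≤ ldiv X Y := by
  refine fun x hx => ⟨hx.1, fun a ha => hY ?_⟩
  have hXY : X * ldiv X Y ≤ Y := (mul_le_iff_le_ldiv fun h => h.1 rfl).mpr le_rfl
  exact cl_mono hXY (mul_cl_le (Language.append_mem_mul ha hx))

theorem cl_rdiv_le (hY : cl Y ≤ Y) : cl (rdiv Y X) ≤ rdiv Y X := by
  refine fun x hx => ⟨hx.1, fun a ha => hY ?_⟩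
  have hYX : rdiv Y X * X ≤ Y := (mul_le_iff_le_rdiv fun h => h.1 rfl).mpr le_rfl
  exact cl_mono hYX (cl_mul_le (Language.append_mem_mul hx ha))

end Residuals

def provable (A : Fm) : Language Fm :=
  {x | x ≠ [] ∧ DerLwV x A}

theorem cl_le_provable {X : Language Fm} {A : Fm} (h : X ≤ provable A) :
    cl X ≤ provable A := by
  refine fun x hx => ⟨hx.1, ?_⟩
  simpa [Ctx.Derives] using hx.2 ⟨[], [], A⟩ fun y hy => by simpa [Ctx.Derives] using (h hy).2

def sem : Fm → Language Fm
  | .pr n => provable (.pr n)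
  | .mul A B => cl (sem A * sem B)
  | .ldiv A B => ldiv (sem A) (sem B)
  | .rdiv B A => rdiv (sem B) (sem A)
  | .or A B => cl (sem A + sem B)
  | .plus A => cl (sem A * (sem A)∗)

theorem nil_notMem_sem (A : Fm) : [] ∉ sem A := by
  cases A <;> exact fun h => h.1 rfl

theorem cl_sem_le : ∀ A : Fm, cl (sem A) ≤ sem A
  | .pr _ => cl_le_provable le_rfl
  | .mul _ _ | .or _ _ | .plus _ => cl_cl_le
  | .ldiv _ B => cl_ldiv_le (cl_sem_le B)
  | .rdiv B _ => cl_rdiv_le (cl_sem_le B)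

theorem sem_mul_le_iff {A B C : Fm} : sem (A.mul B) ≤ sem C ↔ sem A * sem B ≤ sem C :=
  cl_le_iff (Language.nil_notMem_mul_of_left (nil_notMem_sem A)) (cl_sem_le C)

theorem sem_or_le_iff {A B C : Fm} : sem (A.or B) ≤ sem C ↔ sem A ≤ sem C ∧ sem B ≤ sem C :=
  have hnil : [] ∉ sem A + sem B := fun h =>
    ((Language.mem_add _ _ _).mp h).elim (nil_notMem_sem A) (nil_notMem_sem B)
  (cl_le_iff hnil (cl_sem_le C)).trans add_le_iff

theorem sem_mono_of_act {A B : Fm} (h : Act A B) : sem A ≤ sem B := by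
  induction h with
  | id => exact le_rfl
  | assoc_l _ B _ => exact cl_cl_mul_mul_le (nil_notMem_sem B)
  | assoc_r A _ _ => exact cl_mul_cl_mul_le (nil_notMem_sem A)
  | plus_ax A => exact cl_add_cl_mul_le (nil_notMem_sem A)
  | res_rdiv_intro _ ih => exact (mul_le_iff_le_rdiv (nil_notMem_sem _)).mp (sem_mul_le_iff.mp ih)
  | res_rdiv_elim _ ih => exact sem_mul_le_iff.mpr ((mul_le_iff_le_rdiv (nil_notMem_sem _)).mpr ih)
  | res_ldiv_intro _ ih => exact (mul_le_iff_le_ldiv (nil_notMem_sem _)).mp (sem_mul_le_iff.mp ih)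
  | res_ldiv_elim _ ih => exact sem_mul_le_iff.mpr ((mul_le_iff_le_ldiv (nil_notMem_sem _)).mpr ih)
  | trans _ _ ih₁ ih₂ => exact ih₁.trans ih₂
  | or_r₁ _ ih => exact ih.trans ((le_cl (nil_notMem_sem _)).trans (cl_mono le_self_add))
  | or_r₂ _ ih => exact ih.trans ((le_cl (nil_notMem_sem _)).trans (cl_mono le_add_self))
  | or_l _ _ ih₁ ih₂ => exact sem_or_le_iff.mpr ⟨ih₁, ih₂⟩
  | @plus_ind A B _ ih =>
    obtain ⟨hA, hBB⟩ := sem_or_le_iff.mp ih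
    refine (cl_le_iff (Language.nil_notMem_mul_of_left (nil_notMem_sem A)) (cl_sem_le B)).mpr ?_
    exact mul_kstar_le hA ((mul_le_mul_right hA _).trans (sem_mul_le_iff.mp hBB))

theorem singleton_mem_sem_and_sem_le_provable : ∀ A : Fm, [A] ∈ sem A ∧ sem A ≤ provable A
  | .pr _ => ⟨⟨List.cons_ne_nil _ _, .ax _⟩, le_rfl⟩
  | .mul A B => by
    obtain ⟨hA, hleA⟩ := singleton_mem_sem_and_sem_le_provable A
    obtain ⟨hB, hleB⟩ := singleton_mem_sem_and_sem_le_provable B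
    refine ⟨⟨List.cons_ne_nil _ _, fun c hc => (hc _ (Language.append_mem_mul hA hB)).mul_l⟩,
      cl_le_provable ?_⟩
    rintro _ ⟨a, ha, b, hb, rfl⟩
    exact ⟨List.append_ne_nil_of_left_ne_nil (hleA ha).1 b, .mul_r (hleA ha).2 (hleB hb).2⟩
  | .ldiv A B => by
    obtain ⟨hA, hleA⟩ := singleton_mem_sem_and_sem_le_provable A
    obtain ⟨hB, hleB⟩ := singleton_mem_sem_and_sem_le_provable B
    refine ⟨⟨List.cons_ne_nil _ _, fun a ha => cl_sem_le B ?_⟩,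
      fun x hx => ⟨hx.1, .ldiv_r hx.1 (hleB (hx.2 [A] hA)).2⟩⟩
    exact ⟨List.append_ne_nil_of_right_ne_nil a (List.cons_ne_nil _ _),
      fun c hc => (hc _ hB).ldiv_l (hleA ha).2⟩
  | .rdiv B A => by
    obtain ⟨hA, hleA⟩ := singleton_mem_sem_and_sem_le_provable A
    obtain ⟨hB, hleB⟩ := singleton_mem_sem_and_sem_le_provable B
    refine ⟨⟨List.cons_ne_nil _ _, fun a ha => cl_sem_le B ?_⟩,
      fun x hx => ⟨hx.1, .rdiv_r hx.1 (hleB (hx.2 [A] hA)).2⟩⟩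
    exact ⟨List.cons_ne_nil _ _, fun c hc => (hc _ hB).rdiv_l (hleA ha).2⟩
  | .or A B => by
    obtain ⟨hA, hleA⟩ := singleton_mem_sem_and_sem_le_provable A
    obtain ⟨hB, hleB⟩ := singleton_mem_sem_and_sem_le_provable B
    refine ⟨⟨List.cons_ne_nil _ _, fun c hc => .or_l (hc _ (Or.inl hA)) (hc _ (Or.inr hB))⟩,
      cl_le_provable (add_le_iff.mpr ⟨fun x hx => ?_, fun x hx => ?_⟩)⟩
    · exact ⟨(hleA hx).1, .or_r₁ (hleA hx).2⟩
    · exact ⟨(hleB hx).1, .or_r₂ (hleB hx).2⟩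
  | .plus A => by
    obtain ⟨hA, hleA⟩ := singleton_mem_sem_and_sem_le_provable A
    refine ⟨⟨List.cons_ne_nil _ _, fun c hc =>
      .plus_l fun n hn => hc _ (Language.replicate_mem_mul_kstar hA hn)⟩, cl_le_provable ?_⟩
    rintro _ ⟨a, ha, _, ⟨L, rfl, hL⟩, rfl⟩
    refine ⟨List.append_ne_nil_of_left_ne_nil (hleA ha).1 _, ?_⟩
    simpa using DerLwV.plus_r (a :: L) (List.cons_ne_nil _ _)
      (List.forall_mem_cons.mpr ⟨(hleA ha).2, fun l hl => (hleA (hL l hl)).2⟩)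

end LwV

/-- Every arrow derivable in ACT⁺ is derivable in L⁺_ω(∨) as a sequent with a
one-formula antecedent. -/
theorem act_derivable_in_LwV {A B : Fm} (h : Act A B) : DerLwV [A] B :=
  ((LwV.singleton_mem_sem_and_sem_le_provable B).2
    (LwV.sem_mono_of_act h (LwV.singleton_mem_sem_and_sem_le_provable A).1)).2
end

section
/- A sequent is derivable in L⁺_ω(∨) if and only if it is derivable in the cut-free non-well-founded calculus L⁺_∞(∨), where derivability in L⁺_∞(∨) is defined as membership in the greatest set S of sequents such that every sequent in S is the conclusion of one of the rules of L⁺_∞(∨) whose premises all lie in S (equivalently, every sequent in S has a possibly infinitely deep derivation tree using the finitary rules of L⁺_∞(∨)). -/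
/-- `Step S P C` holds iff the sequent `P → C` is the conclusion of one of the
rules of the cut-free calculus L⁺_∞(∨) all of whose premises lie in the set of
sequents `S`.  The rules are: the axiom, the Lambek rules for `·`, `\`, `/`
(with Lambek's restriction), the disjunction rules, and the finitary rules
`(→⁺)₁`, `(→⁺)_L` and `(⁺→)_L` for positive iteration. -/
inductive Step (S : List Fm → Fm → Prop) : List Fm → Fm → Prop where
  | ax (A : Fm) : Step S [A] A
  | ldiv_r {P : List Fm} {A B : Fm} (hne : P ≠ []) :
      S (A :: P) B → Step S P (Fm.ldiv A B)
  | ldiv_l {P Γ Δ : List Fm} {A B C : Fm} :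
      S P A → S (Γ ++ B :: Δ) C →
      Step S (Γ ++ P ++ Fm.ldiv A B :: Δ) C
  | rdiv_r {P : List Fm} {A B : Fm} (hne : P ≠ []) :
      S (P ++ [A]) B → Step S P (Fm.rdiv B A)
  | rdiv_l {P Γ Δ : List Fm} {A B C : Fm} :
      S P A → S (Γ ++ B :: Δ) C →
      Step S (Γ ++ Fm.rdiv B A :: (P ++ Δ)) C
  | mul_r {Γ Δ : List Fm} {A B : Fm} :
      S Γ A → S Δ B → Step S (Γ ++ Δ) (Fm.mul A B)
  | mul_l {Γ Δ : List Fm} {A B C : Fm} :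
      S (Γ ++ A :: B :: Δ) C → Step S (Γ ++ Fm.mul A B :: Δ) C
  | or_r₁ {Γ : List Fm} {A₁ A₂ : Fm} :
      S Γ A₁ → Step S Γ (Fm.or A₁ A₂)
  | or_r₂ {Γ : List Fm} {A₁ A₂ : Fm} :
      S Γ A₂ → Step S Γ (Fm.or A₁ A₂)
  | or_l {Γ Δ : List Fm} {A₁ A₂ C : Fm} :
      S (Γ ++ A₁ :: Δ) C → S (Γ ++ A₂ :: Δ) C →
      Step S (Γ ++ Fm.or A₁ A₂ :: Δ) C
  | plus_r₁ {P : List Fm} {A : Fm} :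
      S P A → Step S P (Fm.plus A)
  | plus_r_L {P₁ P₂ : List Fm} {A : Fm} :
      S P₁ A → S P₂ (Fm.plus A) → Step S (P₁ ++ P₂) (Fm.plus A)
  | plus_l_L {Γ Δ : List Fm} {A C : Fm} :
      S (Γ ++ A :: Δ) C → S (Γ ++ A :: Fm.plus A :: Δ) C →
      Step S (Γ ++ Fm.plus A :: Δ) C

/-- Derivability in the non-well-founded calculus L⁺_∞(∨): membership in the
greatest set of sequents each of which is the conclusion of a rule of
L⁺_∞(∨) whose premises all lie in the set (i.e. the sequent has a possibly
infinitely deep derivation tree). -/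
def DerInf (P : List Fm) (C : Fm) : Prop :=
  ∃ S : List Fm → Fm → Prop, (∀ Δ D, S Δ D → Step S Δ D) ∧ S P C

/-!
From L⁺_ω(∨) to L⁺_∞(∨): the finitary rules are instances of the rules of L⁺_∞(∨), `(→⁺)ₙ` is
`n - 1` applications of `(→⁺)_L`, and the ω-rule is replaced by a coinduction, the sequents
`Γ, Aᵏ, A⁺, Δ → C` forming a post-fixed point in which each is unfolded by `(⁺→)_L`.

From L⁺_∞(∨) to L⁺_ω(∨): induction on the Dershowitz–Manna order of the multiset of the sizes of
the formulas of a sequent. Every premise of a finitary rule is lighter than its conclusion, except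
the premise `Γ, A, A⁺, Δ → C` of `(⁺→)_L`; there the ω-rule is used instead, whose premises
`Γ, Aⁿ, Δ → C` are lighter and are derivable in L⁺_∞(∨) because `(⁺→)_L` is invertible (replacing a
non-principal antecedent occurrence of `A⁺` commutes with every rule). The second premise of
`(→⁺)_L` is lighter since no sequent with empty antecedent is derivable, and `(→⁺)_L` itself is
admissible in L⁺_ω(∨).
-/

theorem Step.mono {S T : List Fm → Fm → Prop} (hST : ∀ X C, S X C → T X C) {X : List Fm}
    {C : Fm} : Step S X C → Step T X C
  | .ax A => .ax A
  | .ldiv_r hne p => .ldiv_r hne (hST _ _ p)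
  | .ldiv_l p q => .ldiv_l (hST _ _ p) (hST _ _ q)
  | .rdiv_r hne p => .rdiv_r hne (hST _ _ p)
  | .rdiv_l p q => .rdiv_l (hST _ _ p) (hST _ _ q)
  | .mul_r p q => .mul_r (hST _ _ p) (hST _ _ q)
  | .mul_l p => .mul_l (hST _ _ p)
  | .or_r₁ p => .or_r₁ (hST _ _ p)
  | .or_r₂ p => .or_r₂ (hST _ _ p)
  | .or_l p q => .or_l (hST _ _ p) (hST _ _ q)
  | .plus_r₁ p => .plus_r₁ (hST _ _ p)
  | .plus_r_L p q => .plus_r_L (hST _ _ p) (hST _ _ q)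
  | .plus_l_L p q => .plus_l_L (hST _ _ p) (hST _ _ q)

namespace DerInf

theorem step {X : List Fm} {C : Fm} (h : DerInf X C) : Step DerInf X C := by
  obtain ⟨S, hS, hXC⟩ := h
  exact (hS X C hXC).mono fun Y D h => ⟨S, hS, h⟩

theorem coinduct (S : List Fm → Fm → Prop)
    (hS : ∀ X C, S X C → Step (fun Y D => DerInf Y D ∨ S Y D) X C) {X : List Fm} {C : Fm}
    (h : S X C) : DerInf X C :=
  ⟨fun Y D => DerInf Y D ∨ S Y D,
    fun _ _ h => h.elim (fun h => h.step.mono fun _ _ => .inl) (hS _ _), .inr h⟩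

theorem of_step {X : List Fm} {C : Fm} (h : Step DerInf X C) : DerInf X C :=
  coinduct (Step DerInf) (fun _ _ h => h.mono fun _ _ => .inl) h

theorem ax (A : Fm) : DerInf [A] A := of_step (.ax A)

theorem plus_r {A : Fm} :
    ∀ Ps : List (List Fm), Ps ≠ [] → (∀ P ∈ Ps, DerInf P A) → DerInf Ps.flatten (Fm.plus A)
  | [P], _, h => by simpa using of_step (.plus_r₁ (h P (by simp)))
  | P :: Q :: Ps, _, h => of_step <| .plus_r_L (h P (by simp))
      (plus_r (Q :: Ps) (by simp) fun R hR => h R (by simp_all))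

theorem plus_l {Γ Δ : List Fm} {A C : Fm}
    (h : ∀ n, 1 ≤ n → DerInf (Γ ++ List.replicate n A ++ Δ) C) :
    DerInf (Γ ++ Fm.plus A :: Δ) C := by
  refine coinduct (fun X D => ∃ k, X = Γ ++ List.replicate k A ++ Fm.plus A :: Δ ∧ D = C) ?_
    ⟨0, by simp, rfl⟩
  rintro X D ⟨k, rfl, rfl⟩
  refine .plus_l_L (Γ := Γ ++ List.replicate k A) (.inl ?_) (.inr ⟨k + 1, ?_, rfl⟩)
  · simpa [List.replicate_succ'] using h (k + 1) (by omega)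
  · simp [List.replicate_succ']

end DerInf

theorem DerLwV.derInf {X : List Fm} {C : Fm} (h : DerLwV X C) : DerInf X C := by
  induction h with
  | ax A => exact .ax A
  | ldiv_r hne _ ih => exact .of_step (.ldiv_r hne ih)
  | ldiv_l _ _ ihp ihq => exact .of_step (.ldiv_l ihp ihq)
  | rdiv_r hne _ ih => exact .of_step (.rdiv_r hne ih)
  | rdiv_l _ _ ihp ihq => exact .of_step (.rdiv_l ihp ihq)
  | mul_r _ _ ihp ihq => exact .of_step (.mul_r ihp ihq)
  | mul_l _ ih => exact .of_step (.mul_l ih)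
  | or_r₁ _ ih => exact .of_step (.or_r₁ ih)
  | or_r₂ _ ih => exact .of_step (.or_r₂ ih)
  | or_l _ _ ihp ihq => exact .of_step (.or_l ihp ihq)
  | plus_r Ps hne _ ih => exact .plus_r Ps hne ih
  | plus_l _ ih => exact .plus_l ih

def Fm.size : Fm → ℕ
  | .pr _ => 1
  | .mul A B | .ldiv A B | .rdiv A B | .or A B => A.size + B.size + 1
  | .plus A => A.size + 1

theorem Step.exists_lt_of_nil {S : List Fm → Fm → Prop} {X : List Fm} {C : Fm}
    (h : Step S X C) (hX : X = []) : ∃ D : Fm, D.size < C.size ∧ S [] D := by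
  cases h with
  | ldiv_r hne => exact absurd hX hne
  | rdiv_r hne => exact absurd hX hne
  | mul_r p => obtain ⟨rfl, -⟩ := List.append_eq_nil_iff.mp hX; exact ⟨_, by simp [Fm.size], p⟩
  | or_r₁ p => subst hX; exact ⟨_, by simp [Fm.size], p⟩
  | or_r₂ p => subst hX; exact ⟨_, by simp [Fm.size], p⟩
  | plus_r₁ p => subst hX; exact ⟨_, by simp [Fm.size], p⟩
  | plus_r_L p => obtain ⟨rfl, -⟩ := List.append_eq_nil_iff.mp hX; exact ⟨_, by simp [Fm.size], p⟩
  | _ => simp at hX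

theorem DerInf.ne_nil {X : List Fm} {C : Fm} (h : DerInf X C) : X ≠ [] := by
  rintro rfl
  induction hC : C.size using Nat.strong_induction_on generalizing C with
  | _ n ih =>
    obtain ⟨D, hD, h'⟩ := h.step.exists_lt_of_nil rfl
    exact ih _ (hC ▸ hD) h' rfl

def List.ReplaceOcc {α : Type*} (a : α) (L X Y : List α) : Prop :=
  ∃ Γ Δ, X = Γ ++ a :: Δ ∧ Y = Γ ++ L ++ Δ

namespace List.ReplaceOcc

variable {α : Type*} {a : α} {L X Y : List α}

theorem append_left (Z : List α) (h : ReplaceOcc a L X Y) : ReplaceOcc a L (Z ++ X) (Z ++ Y) := by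
  obtain ⟨Γ, Δ, rfl, rfl⟩ := h
  exact ⟨Z ++ Γ, Δ, by simp, by simp⟩

theorem append_right (Z : List α) (h : ReplaceOcc a L X Y) :
    ReplaceOcc a L (X ++ Z) (Y ++ Z) := by
  obtain ⟨Γ, Δ, rfl, rfl⟩ := h
  exact ⟨Γ, Δ ++ Z, by simp, by simp⟩

theorem not_nil : ¬ ReplaceOcc a L [] Y := by
  rintro ⟨Γ, Δ, h, -⟩
  simp at h

theorem ne_nil (hL : L ≠ []) (h : ReplaceOcc a L X Y) : Y ≠ [] := by
  obtain ⟨Γ, Δ, -, rfl⟩ := h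
  simp [hL]

theorem of_append {X₁ X₂ : List α} (h : ReplaceOcc a L (X₁ ++ X₂) Y) :
    (∃ Y₁, ReplaceOcc a L X₁ Y₁ ∧ Y = Y₁ ++ X₂) ∨ ∃ Y₂, ReplaceOcc a L X₂ Y₂ ∧ Y = X₁ ++ Y₂ := by
  obtain ⟨Γ, Δ, hX, rfl⟩ := h
  rcases List.append_eq_append_iff.mp hX with ⟨s, rfl, hs⟩ | ⟨s, rfl, hs⟩
  · exact .inr ⟨s ++ L ++ Δ, ⟨s, Δ, hs, rfl⟩, by simp⟩
  · cases s with
    | nil => exact .inr ⟨L ++ Δ, ⟨[], Δ, by simpa using hs.symm, rfl⟩, by simp_all⟩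
    | cons b s =>
      obtain ⟨rfl, rfl⟩ := List.cons_eq_cons.mp hs
      exact .inl ⟨Γ ++ L ++ s, ⟨Γ, s, rfl, rfl⟩, by simp⟩

theorem of_cons {b : α} (h : ReplaceOcc a L (b :: X) Y) :
    (b = a ∧ Y = L ++ X) ∨ ∃ Y', ReplaceOcc a L X Y' ∧ Y = b :: Y' := by
  obtain ⟨Γ, Δ, hX, rfl⟩ := h
  cases Γ with
  | nil => obtain ⟨rfl, rfl⟩ := List.cons_eq_cons.mp hX; exact .inl ⟨rfl, rfl⟩
  | cons c Γ =>
    obtain ⟨rfl, rfl⟩ := List.cons_eq_cons.mp hX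
    exact .inr ⟨Γ ++ L ++ Δ, ⟨Γ, Δ, rfl, rfl⟩, rfl⟩

theorem of_append_cons {Γ Δ : List α} {b : α} (h : ReplaceOcc a L (Γ ++ b :: Δ) Y) :
    (∃ Γ', ReplaceOcc a L Γ Γ' ∧ Y = Γ' ++ b :: Δ) ∨ (b = a ∧ Y = Γ ++ L ++ Δ) ∨
      ∃ Δ', ReplaceOcc a L Δ Δ' ∧ Y = Γ ++ b :: Δ' := by
  rcases h.of_append with hΓ | ⟨Y₂, h₂, rfl⟩
  · exact .inl hΓ
  · rcases h₂.of_cons with ⟨rfl, rfl⟩ | ⟨Δ', hΔ, rfl⟩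
    · exact .inr (.inl ⟨rfl, by simp⟩)
    · exact .inr (.inr ⟨Δ', hΔ, rfl⟩)

end List.ReplaceOcc

open List in
/-- Every rule permutes with replacing a non-principal antecedent occurrence of `A⁺`; the
principal occurrences are those of the axiom and of `(⁺→)_L`. -/
theorem Step.replaceOcc_plus {S : List Fm → Fm → Prop} {A C : Fm} {L X Y : List Fm}
    (h : Step S X C) (hXY : ReplaceOcc A.plus L X Y) (hL : L ≠ []) :
    Step (fun Y' C' => S Y' C' ∨ ∃ X', ReplaceOcc A.plus L X' Y' ∧ S X' C') Y C ∨
      (C = A.plus ∧ Y = L) ∨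
      ∃ Γ Δ, Y = Γ ++ L ++ Δ ∧ S (Γ ++ A :: Δ) C ∧ S (Γ ++ A :: A.plus :: Δ) C := by
  cases h with
  | ax =>
    rcases hXY.of_cons with ⟨rfl, rfl⟩ | ⟨_, h, -⟩
    · exact .inr (.inl ⟨rfl, by simp⟩)
    · exact absurd h ReplaceOcc.not_nil
  | ldiv_r _ p => exact .inl (.ldiv_r (hXY.ne_nil hL) (.inr ⟨_, hXY.append_left [_], p⟩))
  | rdiv_r _ p => exact .inl (.rdiv_r (hXY.ne_nil hL) (.inr ⟨_, hXY.append_right _, p⟩))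
  | or_r₁ p => exact .inl (.or_r₁ (.inr ⟨_, hXY, p⟩))
  | or_r₂ p => exact .inl (.or_r₂ (.inr ⟨_, hXY, p⟩))
  | plus_r₁ p => exact .inl (.plus_r₁ (.inr ⟨_, hXY, p⟩))
  | mul_r p q =>
    rcases hXY.of_append with ⟨_, h, rfl⟩ | ⟨_, h, rfl⟩
    · exact .inl (.mul_r (.inr ⟨_, h, p⟩) (.inl q))
    · exact .inl (.mul_r (.inl p) (.inr ⟨_, h, q⟩))
  | plus_r_L p q =>
    rcases hXY.of_append with ⟨_, h, rfl⟩ | ⟨_, h, rfl⟩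
    · exact .inl (.plus_r_L (.inr ⟨_, h, p⟩) (.inl q))
    · exact .inl (.plus_r_L (.inl p) (.inr ⟨_, h, q⟩))
  | mul_l p =>
    rcases hXY.of_append_cons with ⟨_, h, rfl⟩ | ⟨⟨⟩, -⟩ | ⟨_, h, rfl⟩
    · exact .inl (.mul_l (.inr ⟨_, h.append_right _, p⟩))
    · exact .inl (.mul_l (.inr ⟨_, (h.append_left [_, _]).append_left _, p⟩))
  | or_l p q =>
    rcases hXY.of_append_cons with ⟨_, h, rfl⟩ | ⟨⟨⟩, -⟩ | ⟨_, h, rfl⟩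
    · exact .inl (.or_l (.inr ⟨_, h.append_right _, p⟩) (.inr ⟨_, h.append_right _, q⟩))
    · exact .inl (.or_l (.inr ⟨_, (h.append_left [_]).append_left _, p⟩)
        (.inr ⟨_, (h.append_left [_]).append_left _, q⟩))
  | plus_l_L p q =>
    rcases hXY.of_append_cons with ⟨_, h, rfl⟩ | ⟨⟨⟩, rfl⟩ | ⟨_, h, rfl⟩
    · exact .inl (.plus_l_L (.inr ⟨_, h.append_right _, p⟩) (.inr ⟨_, h.append_right _, q⟩))
    · exact .inr (.inr ⟨_, _, rfl, p, q⟩)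
    · exact .inl (.plus_l_L (.inr ⟨_, (h.append_left [_]).append_left _, p⟩)
        (.inr ⟨_, (h.append_left [_, _]).append_left _, q⟩))
  | ldiv_l p q =>
    rcases hXY.of_append_cons with ⟨_, h, rfl⟩ | ⟨⟨⟩, -⟩ | ⟨_, h, rfl⟩
    · rcases h.of_append with ⟨_, hΓ, rfl⟩ | ⟨_, hP, rfl⟩
      · exact .inl (.ldiv_l (.inl p) (.inr ⟨_, hΓ.append_right _, q⟩))
      · exact .inl (.ldiv_l (.inr ⟨_, hP, p⟩) (.inl q))
    · exact .inl (.ldiv_l (.inl p) (.inr ⟨_, (h.append_left [_]).append_left _, q⟩))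
  | rdiv_l p q =>
    rcases hXY.of_append_cons with ⟨_, h, rfl⟩ | ⟨⟨⟩, -⟩ | ⟨_, h, rfl⟩
    · exact .inl (.rdiv_l (.inl p) (.inr ⟨_, h.append_right _, q⟩))
    · rcases h.of_append with ⟨_, hP, rfl⟩ | ⟨_, hΔ, rfl⟩
      · exact .inl (.rdiv_l (.inr ⟨_, hP, p⟩) (.inl q))
      · exact .inl (.rdiv_l (.inl p) (.inr ⟨_, (hΔ.append_left [_]).append_left _, q⟩))

namespace DerInf

open List in
theorem replaceOcc_plus {A : Fm} {L : List Fm} (hL : L ≠ []) (hax : DerInf L A.plus)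
    (hprinc : ∀ Γ Δ C, DerInf (Γ ++ A :: Δ) C → DerInf (Γ ++ A :: A.plus :: Δ) C →
      DerInf (Γ ++ L ++ Δ) C)
    {X Y : List Fm} {C : Fm} (hXY : ReplaceOcc A.plus L X Y) (h : DerInf X C) : DerInf Y C := by
  refine coinduct (fun Y C => ∃ X, ReplaceOcc A.plus L X Y ∧ DerInf X C) ?_ ⟨X, hXY, h⟩
  rintro Y C ⟨X, hXY, h⟩
  rcases h.step.replaceOcc_plus hXY hL with h' | ⟨rfl, rfl⟩ | ⟨Γ, Δ, rfl, p, q⟩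
  · exact h'
  · exact hax.step.mono fun _ _ => .inl
  · exact (hprinc Γ Δ C p q).step.mono fun _ _ => .inl

theorem plus_l_inv {Γ Δ : List Fm} {A C : Fm} (h : DerInf (Γ ++ A.plus :: Δ) C) :
    DerInf (Γ ++ A :: Δ) C ∧ DerInf (Γ ++ A :: A.plus :: Δ) C :=
  ⟨replaceOcc_plus (L := [A]) (by simp) (of_step (.plus_r₁ (ax A)))
      (fun _ _ _ p _ => by simpa using p) ⟨Γ, Δ, rfl, by simp⟩ h,
    replaceOcc_plus (L := [A, A.plus]) (by simp) (of_step (.plus_r_L (ax A) (ax A.plus)))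
      (fun _ _ _ _ q => by simpa using q) ⟨Γ, Δ, rfl, by simp⟩ h⟩

theorem replicate_of_plus {A C : Fm} {n : ℕ} (hn : 1 ≤ n) :
    ∀ {Γ Δ : List Fm}, DerInf (Γ ++ A.plus :: Δ) C → DerInf (Γ ++ List.replicate n A ++ Δ) C := by
  induction n, hn using Nat.le_induction with
  | base => exact fun h => by simpa using h.plus_l_inv.1
  | succ n _ ih =>
    intro Γ Δ h
    simpa [List.replicate_succ] using ih (Γ := Γ ++ [A]) (by simpa using h.plus_l_inv.2)

end DerInf

theorem DerLwV.plus_r_L {P₁ P₂ : List Fm} {A : Fm} (h₁ : DerLwV P₁ A)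
    (h₂ : DerLwV P₂ A.plus) : DerLwV (P₁ ++ P₂) A.plus := by
  generalize hC : A.plus = C at h₂
  induction h₂ with
  | ax =>
    subst hC
    refine plus_l (Γ := P₁) (Δ := []) fun k _ => ?_
    simpa using plus_r (P₁ :: List.replicate k [A]) (by simp) (by simp [h₁, ax])
  | plus_r Ps _ hPs =>
    cases hC
    simpa using plus_r (P₁ :: Ps) (by simp) (by simpa [h₁] using hPs)
  | ldiv_l p _ _ ihq =>
    simpa using ldiv_l (Γ := P₁ ++ _) p (by simpa using ihq hC)
  | rdiv_l p _ _ ihq =>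
    simpa using rdiv_l (Γ := P₁ ++ _) p (by simpa using ihq hC)
  | mul_l _ ih => simpa using mul_l (Γ := P₁ ++ _) (by simpa using ih hC)
  | or_l _ _ ihp ihq =>
    simpa using or_l (Γ := P₁ ++ _) (by simpa using ihp hC) (by simpa using ihq hC)
  | plus_l _ ih => simpa using plus_l (Γ := P₁ ++ _) fun n hn => by simpa using ih n hn hC
  | _ => cases hC

def seqWeight (X : List Fm) (C : Fm) : Multiset ℕ := ((C :: X).map Fm.size : List ℕ)

open Multiset (IsDershowitzMannaLT)

open Classical in
theorem seqWeight_lt {X' X : List Fm} {C' C : Fm} (F : Fm) (Ys Ctx Rest : List Fm)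
    (hYs : ∀ G ∈ Ys, G.size < F.size := by simp [Fm.size])
    (h' : ∀ G, (C' :: X').count G = (Ctx ++ Ys).count G := by intro; grind)
    (h : ∀ G, (C :: X).count G = (Ctx ++ F :: Rest).count G := by intro; grind) :
    IsDershowitzMannaLT (seqWeight X' C') (seqWeight X C) := by
  refine ⟨(Ctx.map Fm.size : List ℕ), (Ys.map Fm.size : List ℕ), ((F :: Rest).map Fm.size : List ℕ),
    by simp, ?_, ?_, by simpa using fun G hG => .inl (hYs G hG)⟩
  · rw [Multiset.coe_add, ← List.map_append]
    exact Multiset.coe_eq_coe.2 ((List.perm_iff_count.2 h').map _)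
  · rw [Multiset.coe_add, ← List.map_append]
    exact Multiset.coe_eq_coe.2 ((List.perm_iff_count.2 h).map _)

section

variable {P P₁ P₂ Γ Δ : List Fm} {A B C A₁ A₂ : Fm}

theorem seqWeight_ldiv_r : IsDershowitzMannaLT (seqWeight (A :: P) B) (seqWeight P (.ldiv A B)) :=
  seqWeight_lt (.ldiv A B) [A, B] P []

theorem seqWeight_ldiv_l_left :
    IsDershowitzMannaLT (seqWeight P A) (seqWeight (Γ ++ P ++ .ldiv A B :: Δ) C) :=
  seqWeight_lt (.ldiv A B) [A] P (C :: (Γ ++ Δ))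

theorem seqWeight_ldiv_l_right :
    IsDershowitzMannaLT (seqWeight (Γ ++ B :: Δ) C) (seqWeight (Γ ++ P ++ .ldiv A B :: Δ) C) :=
  seqWeight_lt (.ldiv A B) [B] (C :: (Γ ++ Δ)) P

theorem seqWeight_rdiv_r : IsDershowitzMannaLT (seqWeight (P ++ [A]) B) (seqWeight P (.rdiv B A)) :=
  seqWeight_lt (.rdiv B A) [A, B] P []

theorem seqWeight_rdiv_l_left :
    IsDershowitzMannaLT (seqWeight P A) (seqWeight (Γ ++ .rdiv B A :: (P ++ Δ)) C) :=
  seqWeight_lt (.rdiv B A) [A] P (C :: (Γ ++ Δ))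

theorem seqWeight_rdiv_l_right :
    IsDershowitzMannaLT (seqWeight (Γ ++ B :: Δ) C) (seqWeight (Γ ++ .rdiv B A :: (P ++ Δ)) C) :=
  seqWeight_lt (.rdiv B A) [B] (C :: (Γ ++ Δ)) P

theorem seqWeight_mul_r_left :
    IsDershowitzMannaLT (seqWeight Γ A) (seqWeight (Γ ++ Δ) (.mul A B)) :=
  seqWeight_lt (.mul A B) [A] Γ Δ

theorem seqWeight_mul_r_right :
    IsDershowitzMannaLT (seqWeight Δ B) (seqWeight (Γ ++ Δ) (.mul A B)) :=
  seqWeight_lt (.mul A B) [B] Δ Γ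

theorem seqWeight_mul_l :
    IsDershowitzMannaLT (seqWeight (Γ ++ A :: B :: Δ) C) (seqWeight (Γ ++ .mul A B :: Δ) C) :=
  seqWeight_lt (.mul A B) [A, B] (C :: (Γ ++ Δ)) []

theorem seqWeight_or_r₁ : IsDershowitzMannaLT (seqWeight Γ A₁) (seqWeight Γ (.or A₁ A₂)) :=
  seqWeight_lt (.or A₁ A₂) [A₁] Γ []

theorem seqWeight_or_r₂ : IsDershowitzMannaLT (seqWeight Γ A₂) (seqWeight Γ (.or A₁ A₂)) :=
  seqWeight_lt (.or A₁ A₂) [A₂] Γ []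

theorem seqWeight_or_l₁ :
    IsDershowitzMannaLT (seqWeight (Γ ++ A₁ :: Δ) C) (seqWeight (Γ ++ .or A₁ A₂ :: Δ) C) :=
  seqWeight_lt (.or A₁ A₂) [A₁] (C :: (Γ ++ Δ)) []

theorem seqWeight_or_l₂ :
    IsDershowitzMannaLT (seqWeight (Γ ++ A₂ :: Δ) C) (seqWeight (Γ ++ .or A₁ A₂ :: Δ) C) :=
  seqWeight_lt (.or A₁ A₂) [A₂] (C :: (Γ ++ Δ)) []

theorem seqWeight_plus_r₁ : IsDershowitzMannaLT (seqWeight P A) (seqWeight P (.plus A)) :=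
  seqWeight_lt (.plus A) [A] P []

theorem seqWeight_plus_r_L_left :
    IsDershowitzMannaLT (seqWeight P₁ A) (seqWeight (P₁ ++ P₂) (.plus A)) :=
  seqWeight_lt (.plus A) [A] P₁ P₂

theorem seqWeight_plus_r_L_right (hP₁ : P₁ ≠ []) :
    IsDershowitzMannaLT (seqWeight P₂ (.plus A)) (seqWeight (P₁ ++ P₂) (.plus A)) := by
  obtain ⟨F, P₁, rfl⟩ := List.exists_cons_of_ne_nil hP₁
  exact seqWeight_lt F [] (.plus A :: P₂) P₁

theorem seqWeight_replicate (n : ℕ) :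
    IsDershowitzMannaLT (seqWeight (Γ ++ List.replicate n A ++ Δ) C)
      (seqWeight (Γ ++ .plus A :: Δ) C) :=
  seqWeight_lt (.plus A) (List.replicate n A) (C :: (Γ ++ Δ)) []

end

theorem DerInf.derLwV {X : List Fm} {C : Fm} (h : DerInf X C) : DerLwV X C := by
  induction hw : seqWeight X C using (Multiset.wellFounded_isDershowitzMannaLT (α := ℕ)).induction
    generalizing X C with
  | h w ih =>
  subst hw
  replace ih {X' C'} (hlt : IsDershowitzMannaLT (seqWeight X' C') (seqWeight X C))
      (h' : DerInf X' C') : DerLwV X' C' := ih _ hlt h' rfl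
  cases h.step with
  | ax => exact .ax _
  | ldiv_r hne p => exact .ldiv_r hne (ih seqWeight_ldiv_r p)
  | ldiv_l p q => exact .ldiv_l (ih seqWeight_ldiv_l_left p) (ih seqWeight_ldiv_l_right q)
  | rdiv_r hne p => exact .rdiv_r hne (ih seqWeight_rdiv_r p)
  | rdiv_l p q => exact .rdiv_l (ih seqWeight_rdiv_l_left p) (ih seqWeight_rdiv_l_right q)
  | mul_r p q => exact .mul_r (ih seqWeight_mul_r_left p) (ih seqWeight_mul_r_right q)
  | mul_l p => exact .mul_l (ih seqWeight_mul_l p)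
  | or_r₁ p => exact .or_r₁ (ih seqWeight_or_r₁ p)
  | or_r₂ p => exact .or_r₂ (ih seqWeight_or_r₂ p)
  | or_l p q => exact .or_l (ih seqWeight_or_l₁ p) (ih seqWeight_or_l₂ q)
  | plus_r₁ p => simpa using DerLwV.plus_r [X] (by simp) (by simpa using ih seqWeight_plus_r₁ p)
  | plus_r_L p q =>
    exact (ih seqWeight_plus_r_L_left p).plus_r_L (ih (seqWeight_plus_r_L_right p.ne_nil) q)
  | plus_l_L => exact .plus_l fun n hn => ih (seqWeight_replicate n) (h.replicate_of_plus hn)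

/-- A sequent is derivable in L⁺_ω(∨) iff it is derivable in the cut-free
non-well-founded calculus L⁺_∞(∨). -/
theorem LwV_iff_LinfV (P : List Fm) (C : Fm) : DerLwV P C ↔ DerInf P C :=
  ⟨DerLwV.derInf, DerInf.derLwV⟩
end

section
/- In the Lambek calculus L, the product-introduction rule on the right is invertible for antecedents consisting of types with tops: if every type of the sequence Π has a top and the sequent Π → A₁ · A₂ · … · Aₙ is derivable in L, then Π decomposes as Π = Π₁, Π₂, …, Πₙ and the sequent Πᵢ → Aᵢ is derivable in L for every i = 1, …, n. -/
/-- Types of the Lambek calculus: primitive types, product `mul`,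
left division `ldiv A B = A \ B`, right division `rdiv B A = B / A`. -/
inductive Tp : Type where
  | pr : ℕ → Tp
  | mul : Tp → Tp → Tp
  | ldiv : Tp → Tp → Tp   -- `ldiv A B` is `A \ B`
  | rdiv : Tp → Tp → Tp   -- `rdiv B A` is `B / A`

/-- Derivability in the Lambek calculus L (with Lambek's non-emptiness
restriction). -/
inductive DerL : List Tp → Tp → Prop where
  | ax (A : Tp) : DerL [A] A
  | ldiv_r {P : List Tp} {A B : Tp} (hne : P ≠ []) :
      DerL (A :: P) B → DerL P (Tp.ldiv A B)
  | ldiv_l {P Γ Δ : List Tp} {A B C : Tp} :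
      DerL P A → DerL (Γ ++ B :: Δ) C →
      DerL (Γ ++ P ++ Tp.ldiv A B :: Δ) C
  | rdiv_r {P : List Tp} {A B : Tp} (hne : P ≠ []) :
      DerL (P ++ [A]) B → DerL P (Tp.rdiv B A)
  | rdiv_l {P Γ Δ : List Tp} {A B C : Tp} :
      DerL P A → DerL (Γ ++ B :: Δ) C →
      DerL (Γ ++ Tp.rdiv B A :: (P ++ Δ)) C
  | mul_r {Γ Δ : List Tp} {A B : Tp} :
      DerL Γ A → DerL Δ B → DerL (Γ ++ Δ) (Tp.mul A B)
  | mul_l {Γ Δ : List Tp} {A B C : Tp} :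
      DerL (Γ ++ A :: B :: Δ) C → DerL (Γ ++ Tp.mul A B :: Δ) C
/-- The top of a type: `top? q = some q` for primitive `q`,
`top? (A \ B) = top? (B / A) = top? B`; products have no top. -/
def top? : Tp → Option ℕ
  | Tp.pr q => some q
  | Tp.mul _ _ => none
  | Tp.ldiv _ B => top? B
  | Tp.rdiv B _ => top? B

/-- `prodTp A [A₂, …, Aₙ]` is the product `A · A₂ · … · Aₙ`
(associated to the left). -/
def prodTp : Tp → List Tp → Tp
  | A, [] => A
  | A, B :: l => prodTp (Tp.mul A B) l

/-!
Having a top means containing no product outside argument positions of divisions, so a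
derivation of `Π → A · B` with such `Π` cannot end with an axiom or with `(·→)`. If it
ends with `(\→)` or `(/→)`, that rule only replaces one type `B'` of its right premise's
antecedent, and this antecedent again consists of types with tops (`B'` is the value of
the divided type, which has the same top). By induction it splits for `A · B`, and the
rule can be reapplied on whichever side contains `B'`. As the product `A₁ · … · Aₙ` is
associated to the left, peeling off the last factor repeatedly gives the theorem.
-/

theorem List.append_cons_eq_append_iff {α : Type*} {Γ Δ S₁ S₂ : List α} {b : α} :
    Γ ++ b :: Δ = S₁ ++ S₂ ↔
      (∃ Δ₁, S₁ = Γ ++ b :: Δ₁ ∧ Δ = Δ₁ ++ S₂) ∨ ∃ Γ₂, S₂ = Γ₂ ++ b :: Δ ∧ Γ = S₁ ++ Γ₂ := by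
  rw [List.append_eq_append_iff]
  constructor
  · rintro (⟨as, rfl, hb⟩ | ⟨bs, rfl, rfl⟩)
    · rcases List.cons_eq_append_iff.1 hb with ⟨rfl, rfl⟩ | ⟨Δ₁, rfl, rfl⟩
      · exact Or.inr ⟨[], rfl, by simp⟩
      · exact Or.inl ⟨Δ₁, rfl, rfl⟩
    · exact Or.inr ⟨bs, rfl, rfl⟩
  · rintro (⟨Δ₁, rfl, rfl⟩ | ⟨Γ₂, rfl, rfl⟩)
    · exact Or.inl ⟨b :: Δ₁, rfl, rfl⟩
    · exact Or.inr ⟨Γ₂, rfl, rfl⟩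

namespace DerL

def Splits (P : List Tp) (A B : Tp) : Prop :=
  ∃ Γ Δ, P = Γ ++ Δ ∧ DerL Γ A ∧ DerL Δ B

theorem Splits.replace {B : Tp} {Q : List Tp}
    (hrule : ∀ {Γ Δ C}, DerL (Γ ++ B :: Δ) C → DerL (Γ ++ Q ++ Δ) C)
    {Γ Δ : List Tp} {A₁ A₂ : Tp} (h : Splits (Γ ++ B :: Δ) A₁ A₂) :
    Splits (Γ ++ Q ++ Δ) A₁ A₂ := by
  obtain ⟨S₁, S₂, heq, h₁, h₂⟩ := h
  rcases List.append_cons_eq_append_iff.1 heq with ⟨Δ₁, rfl, rfl⟩ | ⟨Γ₂, rfl, rfl⟩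
  · exact ⟨Γ ++ Q ++ Δ₁, S₂, by simp, hrule h₁, h₂⟩
  · exact ⟨S₁, Γ₂ ++ Q ++ Δ, by simp, h₁, hrule h₂⟩

theorem splits_of_mul {P : List Tp} {A B : Tp} (h : DerL P (Tp.mul A B))
    (hT : ∀ X ∈ P, (top? X).isSome) : Splits P A B := by
  generalize hC : Tp.mul A B = C at h
  induction h with
  | ax => subst hC; simpa [top?] using hT _ (List.mem_singleton_self _)
  | ldiv_r | rdiv_r => cases hC
  | mul_r h₁ h₂ => cases hC; exact ⟨_, _, rfl, h₁, h₂⟩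
  | @mul_l _ _ A' B' => simpa [top?] using hT (Tp.mul A' B') (by simp)
  | @ldiv_l P' Γ Δ A' B' _ hP _ _ ih =>
    have hT' : ∀ X ∈ Γ ++ B' :: Δ, (top? X).isSome := by
      simp only [List.forall_mem_append, List.forall_mem_cons] at hT ⊢
      exact ⟨hT.1.1, hT.2.1, hT.2.2⟩
    have hsplit := ih hT' hC
    simpa using hsplit.replace (Q := P' ++ [Tp.ldiv A' B']) fun hd => by
      simpa using ldiv_l hP hd
  | @rdiv_l P' Γ Δ A' B' _ hP _ _ ih =>
    have hT' : ∀ X ∈ Γ ++ B' :: Δ, (top? X).isSome := by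
      simp only [List.forall_mem_append, List.forall_mem_cons] at hT ⊢
      exact ⟨hT.1, hT.2.1, hT.2.2.2⟩
    have hsplit := ih hT' hC
    simpa using hsplit.replace (Q := Tp.rdiv B' A' :: P') fun hd => by
      simpa using rdiv_l hP hd

end DerL

/-- The rule `(→·)` is invertible for antecedents of types with tops: if every
type of `P` has a top and `P → A₁ · A₂ · … · Aₙ` is derivable in L, then `P`
decomposes as `P = P₁, …, Pₙ` with each `Pᵢ → Aᵢ` derivable in L. -/
theorem prod_right_invertible {P : List Tp} {A : Tp} {As : List Tp}
    (hT : ∀ X ∈ P, (top? X).isSome)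
    (h : DerL P (prodTp A As)) :
    ∃ (P₁ : List Tp) (Ps : List (List Tp)),
      P = P₁ ++ Ps.flatten ∧ DerL P₁ A ∧ List.Forall₂ DerL Ps As := by
  induction As generalizing A with
  | nil => exact ⟨P, [], by simp, h, by simp⟩
  | cons B As ih =>
    obtain ⟨Q, Ps, rfl, hQ, hPs⟩ := ih h
    obtain ⟨P₁, P₂, rfl, h₁, h₂⟩ := DerL.splits_of_mul hQ fun X hX => hT X (by simp [hX])
    exact ⟨P₁, P₂ :: Ps, by simp, h₁, .cons h₂ hPs⟩
end

section
/- Let q be a primitive type and Π a non-empty sequence of types such that every type of Π has a top and none of these tops equals q. Then the sequent Π → q/q is not derivable in the Lambek calculus L. -/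
/-! Call a type admissible if it is `q` or has a top other than `q`. In a left rule with an
admissible antecedent the principal type is a division whose value `B` has the same top, so the
premise antecedent is admissible as well; products are never admissible. Hence, by induction, an
admissible antecedent derives `q` only through the axiom `q → q`. The type `q / q` is not
admissible, so `Π → q / q` could only end with `(→/)` from `Π q → q`, forcing `Π` to be
empty, which Lambek's restriction excludes. -/

def TopNe (q : ℕ) (X : Tp) : Prop := ∃ t, top? X = some t ∧ t ≠ q

def Admissible (q : ℕ) (X : Tp) : Prop := X = Tp.pr q ∨ TopNe q X

section
variable {q : ℕ} {A B : Tp} {Γ P Δ : List Tp}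

theorem not_topNe_pr : ¬ TopNe q (Tp.pr q) := by
  rintro ⟨t, ht, htq⟩
  exact htq (Option.some.inj ht).symm

theorem admissible_ldiv : Admissible q (Tp.ldiv A B) ↔ TopNe q B := by
  simp [Admissible, TopNe, top?]

theorem admissible_rdiv : Admissible q (Tp.rdiv B A) ↔ TopNe q B := by
  simp [Admissible, TopNe, top?]

theorem not_admissible_mul : ¬ Admissible q (Tp.mul A B) := by
  simp [Admissible, TopNe, top?]

theorem forall_admissible_of_ldiv_l (h : ∀ X ∈ Γ ++ P ++ Tp.ldiv A B :: Δ, Admissible q X) :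
    TopNe q B ∧ ∀ X ∈ Γ ++ B :: Δ, Admissible q X := by
  simp only [List.forall_mem_append, List.forall_mem_cons, admissible_ldiv] at h ⊢
  exact ⟨h.2.1, h.1.1, Or.inr h.2.1, h.2.2⟩

theorem forall_admissible_of_rdiv_l (h : ∀ X ∈ Γ ++ Tp.rdiv B A :: (P ++ Δ), Admissible q X) :
    TopNe q B ∧ ∀ X ∈ Γ ++ B :: Δ, Admissible q X := by
  simp only [List.forall_mem_append, List.forall_mem_cons, admissible_rdiv] at h ⊢
  exact ⟨h.2.1, h.1, Or.inr h.2.1, h.2.2.2⟩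

theorem not_forall_admissible_of_mul (h : ∀ X ∈ Γ ++ Tp.mul A B :: Δ, Admissible q X) :
    False :=
  not_admissible_mul (h (Tp.mul A B) (by simp))

theorem append_cons_ne_singleton_pr (hB : TopNe q B) : Γ ++ B :: Δ ≠ [Tp.pr q] := by
  intro h
  have hmem : B ∈ [Tp.pr q] := h ▸ by simp
  exact not_topNe_pr (List.mem_singleton.1 hmem ▸ hB)

theorem DerL.eq_singleton_pr {C : Tp} (h : DerL Γ C) (hC : C = Tp.pr q)
    (hΓ : ∀ X ∈ Γ, Admissible q X) : Γ = [Tp.pr q] := by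
  induction h with
  | ax => rw [hC]
  | ldiv_r | rdiv_r | mul_r => cases hC
  | ldiv_l _ _ _ ih =>
    obtain ⟨hB, hΓ'⟩ := forall_admissible_of_ldiv_l hΓ
    exact (append_cons_ne_singleton_pr hB (ih hC hΓ')).elim
  | rdiv_l _ _ _ ih =>
    obtain ⟨hB, hΓ'⟩ := forall_admissible_of_rdiv_l hΓ
    exact (append_cons_ne_singleton_pr hB (ih hC hΓ')).elim
  | mul_l => exact (not_forall_admissible_of_mul hΓ).elim

theorem DerL.ne_rdiv_pr_pr {C : Tp} (h : DerL Γ C)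
    (hΓ : ∀ X ∈ Γ, Admissible q X) : C ≠ Tp.rdiv (Tp.pr q) (Tp.pr q) := by
  induction h with
  | ax =>
    rintro rfl
    exact not_topNe_pr (admissible_rdiv.1 (hΓ _ (List.mem_singleton_self _)))
  | ldiv_r | mul_r => exact Tp.noConfusion
  | @rdiv_r P A B hne hd _ =>
    rintro hC
    obtain ⟨rfl, rfl⟩ := Tp.rdiv.inj hC
    have hP : P ++ [Tp.pr q] = [Tp.pr q] :=
      hd.eq_singleton_pr rfl
        (List.forall_mem_append.2 ⟨hΓ, List.forall_mem_singleton.2 (Or.inl rfl)⟩)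
    exact hne (by simpa using hP)
  | ldiv_l _ _ _ ih => exact ih (forall_admissible_of_ldiv_l hΓ).2
  | rdiv_l _ _ _ ih => exact ih (forall_admissible_of_rdiv_l hΓ).2
  | mul_l => exact (not_forall_admissible_of_mul hΓ).elim

end

theorem not_derivable_qq_general {q : ℕ} {P : List Tp}
    (hT : ∀ X ∈ P, ∃ t : ℕ, top? X = some t ∧ t ≠ q) :
    ¬ DerL P (Tp.rdiv (Tp.pr q) (Tp.pr q)) :=
  fun h => h.ne_rdiv_pr_pr (fun X hX => Or.inr (hT X hX)) rfl

/-- If all types of the non-empty sequence `P` have tops and none of these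
tops is the primitive type `q`, then `P → q / q` is not derivable in L. -/
theorem not_derivable_qq {q : ℕ} {P : List Tp} (hne : P ≠ [])
    (hT : ∀ X ∈ P, ∃ t : ℕ, top? X = some t ∧ t ≠ q) :
    ¬ DerL P (Tp.rdiv (Tp.pr q) (Tp.pr q)) :=
  not_derivable_qq_general hT
end

section
/- Let q be a primitive type and let Π, Φ be (possibly empty) sequences of types such that every type in Π and Φ has a top and none of these tops equals q. If the sequent Π, q/q, Φ → q/q is derivable in the Lambek calculus L, then both Π and Φ are empty. -/
/-!
Derivable sequents are sound in every unital quantale, in particular in the languages over `ℕ`.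
Interpret `q` as `{[q]}` and every other primitive `p` as the set of words containing `p`.
Then `q/q` denotes exactly `{[]}`, while a type whose top is `t ≠ q` contains every word
containing `t`, e.g. `[t]`. So the antecedent `P, q/q, Φ` contains a word of length at least
`|P| + |Φ|`, and soundness forces this word into `{[]}`.
-/

open Quantale

section Quantale

variable {M : Type*} [Monoid M] [CompleteLattice M]

theorem mul_rightMulResiduation_le [IsQuantale M] {x y : M} : x * (x ⇨ᵣ y) ≤ y :=
  rightMulResiduation_le_iff_mul_le.mp le_rfl

theorem leftMulResiduation_mul_le [IsQuantale M] {x y : M} : (x ⇨ₗ y) * x ≤ y :=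
  leftMulResiduation_le_iff_mul_le.mp le_rfl

/-- Mathlib's `x ⇨ᵣ y` is the largest `z` with `x * z ≤ y`, so it interprets `A \ B`,
and `x ⇨ₗ y` interprets `B / A`. -/
def Tp.interp (val : ℕ → M) : Tp → M
  | .pr p => val p
  | .mul A B => A.interp val * B.interp val
  | .ldiv A B => A.interp val ⇨ᵣ B.interp val
  | .rdiv B A => A.interp val ⇨ₗ B.interp val

def interpCtx (val : ℕ → M) (Γ : List Tp) : M :=
  (Γ.map (Tp.interp val)).prod

@[simp]
theorem interpCtx_nil (val : ℕ → M) : interpCtx val [] = 1 := rfl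

@[simp]
theorem interpCtx_cons (val : ℕ → M) (X : Tp) (Γ : List Tp) :
    interpCtx val (X :: Γ) = X.interp val * interpCtx val Γ := List.prod_cons

@[simp]
theorem interpCtx_append (val : ℕ → M) (Γ Δ : List Tp) :
    interpCtx val (Γ ++ Δ) = interpCtx val Γ * interpCtx val Δ := by
  simp [interpCtx]

theorem DerL.interpCtx_le [IsQuantale M] (val : ℕ → M) {Γ : List Tp} {C : Tp} (h : DerL Γ C) :
    interpCtx val Γ ≤ C.interp val := by
  induction h with
  | ax => simp
  | ldiv_r _ _ ih => exact rightMulResiduation_le_iff_mul_le.mpr (by simpa using ih)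
  | rdiv_r _ _ ih => exact leftMulResiduation_le_iff_mul_le.mpr (by simpa using ih)
  | @ldiv_l P Γ Δ A B C _ _ ihP ih =>
    simp only [interpCtx_append, interpCtx_cons, Tp.interp] at ih ⊢
    calc _ = interpCtx val Γ * (interpCtx val P * (A.interp val ⇨ᵣ B.interp val))
            * interpCtx val Δ := by simp only [mul_assoc]
      _ ≤ interpCtx val Γ * B.interp val * interpCtx val Δ := by
        gcongr
        exact (mul_le_mul_left ihP _).trans mul_rightMulResiduation_le
      _ ≤ C.interp val := by simpa only [mul_assoc] using ih
  | @rdiv_l P Γ Δ A B C _ _ ihP ih =>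
    simp only [interpCtx_append, interpCtx_cons, Tp.interp] at ih ⊢
    calc _ = interpCtx val Γ * ((A.interp val ⇨ₗ B.interp val) * interpCtx val P)
            * interpCtx val Δ := by simp only [mul_assoc]
      _ ≤ interpCtx val Γ * B.interp val * interpCtx val Δ := by
        gcongr
        exact (mul_le_mul_right ihP _).trans leftMulResiduation_mul_le
      _ ≤ C.interp val := by simpa only [mul_assoc] using ih
  | mul_r _ _ ihΓ ihΔ => simpa [Tp.interp] using mul_le_mul' ihΓ ihΔ
  | mul_l _ ih => simpa [Tp.interp, mul_assoc] using ih

end Quantale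

namespace Language

variable {α : Type*}

instance : IsQuantale (Language α) where
  mul_sSup_distrib l s := by simp only [sSup_eq_iSup, mul_iSup]
  sSup_mul_distrib s l := by simp only [sSup_eq_iSup, iSup_mul]

theorem mem_iff_singleton_le {l : Language α} {w : List α} : w ∈ l ↔ {w} ≤ l :=
  Set.singleton_subset_iff.symm

theorem mem_rightMulResiduation {l m : Language α} {w : List α} :
    w ∈ l ⇨ᵣ m ↔ ∀ a ∈ l, a ++ w ∈ m := by
  rw [mem_iff_singleton_le, rightMulResiduation_le_iff_mul_le]
  exact ⟨fun h a ha ↦ h (mem_mul.mpr ⟨a, ha, w, rfl, rfl⟩),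
    fun h _ hx ↦ by obtain ⟨a, ha, _, rfl, rfl⟩ := mem_mul.mp hx; exact h a ha⟩

theorem mem_leftMulResiduation {l m : Language α} {w : List α} :
    w ∈ l ⇨ₗ m ↔ ∀ a ∈ l, w ++ a ∈ m := by
  rw [mem_iff_singleton_le, leftMulResiduation_le_iff_mul_le]
  exact ⟨fun h a ha ↦ h (mem_mul.mpr ⟨w, rfl, a, ha, rfl⟩),
    fun h _ hx ↦ by obtain ⟨_, rfl, a, ha, rfl⟩ := mem_mul.mp hx; exact h a ha⟩

end Language

def topModel (q p : ℕ) : Language ℕ :=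
  {w | if p = q then w = [q] else p ∈ w}

theorem mem_topModel {q p : ℕ} {w : List ℕ} :
    w ∈ topModel q p ↔ if p = q then w = [q] else p ∈ w :=
  Iff.rfl

theorem mem_interp_of_mem_top {val : ℕ → Language ℕ} {t : ℕ}
    (hval : ∀ w, t ∈ w → w ∈ val t) :
    ∀ {X : Tp}, top? X = some t → ∀ {w : List ℕ}, t ∈ w → w ∈ X.interp val
  | .pr p, hX, w, hw => by
    obtain rfl : p = t := by simpa [top?] using hX
    exact hval w hw
  | .ldiv _ B, hX, w, hw => Language.mem_rightMulResiduation.mpr fun a _ ↦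
    mem_interp_of_mem_top hval (X := B) hX (List.mem_append_right a hw)
  | .rdiv B _, hX, w, hw => Language.mem_leftMulResiduation.mpr fun a _ ↦
    mem_interp_of_mem_top hval (X := B) hX (List.mem_append_left a hw)

theorem exists_mem_interpCtx_length_le {α : Type*} {val : ℕ → Language α} :
    ∀ {Γ : List Tp}, (∀ X ∈ Γ, ∃ w ∈ X.interp val, w ≠ []) →
      ∃ w ∈ interpCtx val Γ, Γ.length ≤ w.length
  | [], _ => ⟨[], rfl, le_rfl⟩
  | X :: Γ, h => by
    obtain ⟨a, ha, ha₀⟩ := h X List.mem_cons_self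
    obtain ⟨u, hu, hΓu⟩ :=
      exists_mem_interpCtx_length_le fun Y hY ↦ h Y (List.mem_cons_of_mem X hY)
    refine ⟨a ++ u, Language.mem_mul.mpr ⟨a, ha, u, hu, rfl⟩, ?_⟩
    have := List.length_pos_iff.mpr ha₀
    simp only [List.length_cons, List.length_append]
    omega

theorem mem_interp_qq_topModel_iff {q : ℕ} {w : List ℕ} :
    w ∈ (Tp.rdiv (.pr q) (.pr q)).interp (topModel q) ↔ w = [] := by
  simp [Tp.interp, Language.mem_leftMulResiduation, mem_topModel]

/-- If all types of `P` and `Φ` have tops, none of these tops is `q`, and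
`P, q/q, Φ → q/q` is derivable in L, then `P` and `Φ` are empty. -/
theorem qq_context_empty {q : ℕ} {P Φ : List Tp}
    (hT : ∀ X ∈ P ++ Φ, ∃ t : ℕ, top? X = some t ∧ t ≠ q)
    (h : DerL (P ++ Tp.rdiv (Tp.pr q) (Tp.pr q) :: Φ)
      (Tp.rdiv (Tp.pr q) (Tp.pr q))) :
    P = [] ∧ Φ = [] := by
  have hne : ∀ X ∈ P ++ Φ, ∃ w ∈ X.interp (topModel q), w ≠ [] := fun X hX ↦ by
    obtain ⟨t, hX, htq⟩ := hT X hX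
    have hval : ∀ w, t ∈ w → w ∈ topModel q t := fun w hw ↦ by
      rwa [mem_topModel, if_neg htq]
    exact ⟨[t], mem_interp_of_mem_top hval hX (List.mem_singleton_self t),
      List.cons_ne_nil t []⟩
  obtain ⟨u, hu, hPu⟩ :=
    exists_mem_interpCtx_length_le fun X hX ↦ hne X (List.mem_append_left Φ hX)
  obtain ⟨v, hv, hΦv⟩ :=
    exists_mem_interpCtx_length_le fun X hX ↦ hne X (List.mem_append_right P hX)
  have huv :
      u ++ ([] ++ v) ∈ interpCtx (topModel q) (P ++ Tp.rdiv (Tp.pr q) (Tp.pr q) :: Φ) := by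
    rw [interpCtx_append, interpCtx_cons]
    exact Language.mem_mul.mpr ⟨u, hu, _,
      Language.mem_mul.mpr ⟨[], mem_interp_qq_topModel_iff.mpr rfl, v, hv, rfl⟩, rfl⟩
  obtain ⟨rfl, rfl⟩ : u = [] ∧ v = [] := by
    simpa using mem_interp_qq_topModel_iff.mp (h.interpCtx_le (topModel q) huv)
  exact ⟨List.length_eq_zero_iff.mp (by simpa using hPu),
    List.length_eq_zero_iff.mp (by simpa using hΦv)⟩
end
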